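/- Let h ∈ ℝ[x,y,z] and let X_ℝ = {v ∈ ℝ³ : h(v) = 0}. For r > 0 define the critical set C_r = {p ∈ E_r ∩ X_ℝ : q attains a maximum on E_r ∩ X_ℝ at p or q attains a minimum on E_r ∩ X_ℝ at p} (IsMaxOn or IsMinOn for q on E_r ∩ X_ℝ). Then q tends to L at O along X_ℝ if and only if for every ε > 0 there exists δ > 0 such that for every r with 0 < r < δ and every p ∈ C_r, |q(p) − L| < ε. -/

import Mathlib

/-!
For `r > 0` small the ellipsoids `E_r` are compact, sweep out a punctured neighbourhood of `O`
as `r → 0`, and stay inside the ball where `g` vanishes only at `O`. So `q` is continuous on each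
compact slice `E_r ∩ X_ℝ`, and every value of `q` there lies between its minimum and its maximum.
Hence bounds at the critical points `C_r` bound `q` on the whole slice, and uniform bounds on small
slices are exactly the limit of `q` along `X_ℝ`.
-/

open MvPolynomial Filter Topology

/-- The quotient `q(v) = f(v)/g(v)`, with the convention `q(v) = 0` when `g(v) = 0`. -/
noncomputable def quotFun (f g : MvPolynomial (Fin 3) ℝ) (v : EuclideanSpace ℝ (Fin 3)) : ℝ :=
  eval v f / eval v g

/-- The ellipsoid `Ax² + By² + Cz² = r²`. -/
def ellipsoid (A B C r : ℝ) : Set (EuclideanSpace ℝ (Fin 3)) :=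
  {v | A * (v 0) ^ 2 + B * (v 1) ^ 2 + C * (v 2) ^ 2 = r ^ 2}

open Metric

lemma continuous_eval_euclidean {σ : Type*} (p : MvPolynomial σ ℝ) :
    Continuous fun v : EuclideanSpace ℝ σ => eval v p :=
  (MvPolynomial.continuous_eval p).comp (PiLp.continuous_ofLp 2 _)

lemma continuousOn_quotFun (f g : MvPolynomial (Fin 3) ℝ) :
    ContinuousOn (quotFun f g) {v | eval v g ≠ 0} := fun _ hv =>
  ((continuous_eval_euclidean f).continuousAt.div (continuous_eval_euclidean g).continuousAt
    hv).continuousWithinAt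

lemma IsCompact.abs_sub_lt_of_isExtrOn {α : Type*} [TopologicalSpace α] {K : Set α}
    {q : α → ℝ} {L ε : ℝ} (hK : IsCompact K) (hq : ContinuousOn q K)
    (H : ∀ p ∈ K, IsMaxOn q K p ∨ IsMinOn q K p → |q p - L| < ε) {v : α} (hv : v ∈ K) :
    |q v - L| < ε := by
  obtain ⟨pmax, hpmax, hmax⟩ := hK.exists_isMaxOn ⟨v, hv⟩ hq
  obtain ⟨pmin, hpmin, hmin⟩ := hK.exists_isMinOn ⟨v, hv⟩ hq
  have hup := abs_lt.mp (H pmax hpmax (.inl hmax))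
  have hlow := abs_lt.mp (H pmin hpmin (.inr hmin))
  have hle_max : q v ≤ q pmax := hmax hv
  have hmin_le : q pmin ≤ q v := hmin hv
  exact abs_lt.mpr ⟨by linarith, by linarith⟩

section Ellipsoid

variable {A B C r : ℝ}

lemma norm_sq_eq_sum_sq (v : EuclideanSpace ℝ (Fin 3)) :
    ‖v‖ ^ 2 = v 0 ^ 2 + v 1 ^ 2 + v 2 ^ 2 := by
  rw [EuclideanSpace.real_norm_sq_eq, Fin.sum_univ_three]

lemma min_mul_norm_sq_le (v : EuclideanSpace ℝ (Fin 3)) :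
    min A (min B C) * ‖v‖ ^ 2 ≤ A * v 0 ^ 2 + B * v 1 ^ 2 + C * v 2 ^ 2 := by
  rw [norm_sq_eq_sum_sq, mul_add, mul_add]
  gcongr
  · exact min_le_left _ _
  · exact (min_le_right _ _).trans (min_le_left _ _)
  · exact (min_le_right _ _).trans (min_le_right _ _)

lemma le_max_mul_norm_sq (v : EuclideanSpace ℝ (Fin 3)) :
    A * v 0 ^ 2 + B * v 1 ^ 2 + C * v 2 ^ 2 ≤ max A (max B C) * ‖v‖ ^ 2 := by
  rw [norm_sq_eq_sum_sq, mul_add, mul_add]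
  gcongr
  · exact le_max_left _ _
  · exact (le_max_left _ _).trans (le_max_right _ _)
  · exact (le_max_right _ _).trans (le_max_right _ _)

lemma zero_notMem_ellipsoid (hr : r ≠ 0) :
    (0 : EuclideanSpace ℝ (Fin 3)) ∉ ellipsoid A B C r := by
  simp [ellipsoid, eq_comm, hr]

lemma isClosed_ellipsoid : IsClosed (ellipsoid A B C r) :=
  isClosed_eq (by fun_prop) continuous_const

lemma norm_le_of_mem_ellipsoid (hm : 0 ≤ min A (min B C)) {v : EuclideanSpace ℝ (Fin 3)}
    (hv : v ∈ ellipsoid A B C r) : √(min A (min B C)) * ‖v‖ ≤ |r| := by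
  rw [← Real.sqrt_sq_eq_abs, ← hv, ← Real.sqrt_sq (norm_nonneg v), ← Real.sqrt_mul hm]
  exact Real.sqrt_le_sqrt (min_mul_norm_sq_le v)

lemma ellipsoid_subset_ball (hm : 0 ≤ min A (min B C)) {δ : ℝ}
    (hr : |r| < √(min A (min B C)) * δ) : ellipsoid A B C r ⊆ ball 0 δ := fun v hv => by
  rw [mem_ball_zero_iff]
  have hvr := norm_le_of_mem_ellipsoid hm hv
  exact lt_of_mul_lt_mul_left (hvr.trans_lt hr) (Real.sqrt_nonneg _)

lemma isCompact_ellipsoid (hm : 0 < min A (min B C)) : IsCompact (ellipsoid A B C r) := by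
  have hsub : ellipsoid A B C r ⊆ ball 0 ((|r| + 1) / √(min A (min B C))) :=
    ellipsoid_subset_ball hm.le (by rw [mul_div_cancel₀ _ (Real.sqrt_pos.mpr hm).ne']; linarith)
  exact isCompact_of_isClosed_isBounded isClosed_ellipsoid (isBounded_ball.subset hsub)

lemma exists_mem_ellipsoid (hA : 0 < A) (hB : 0 < B) (hC : 0 < C)
    {v : EuclideanSpace ℝ (Fin 3)} (hv : v ≠ 0) :
    ∃ r, 0 < r ∧ r ≤ √(max A (max B C)) * ‖v‖ ∧ v ∈ ellipsoid A B C r := by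
  have hm : 0 < min A (min B C) := lt_min hA (lt_min hB hC)
  have hpos : 0 < A * v 0 ^ 2 + B * v 1 ^ 2 + C * v 2 ^ 2 :=
    (mul_pos hm (by positivity)).trans_le (min_mul_norm_sq_le v)
  refine ⟨√(A * v 0 ^ 2 + B * v 1 ^ 2 + C * v 2 ^ 2), Real.sqrt_pos.mpr hpos, ?_,
    (Real.sq_sqrt hpos.le).symm⟩
  rw [← Real.sqrt_sq (norm_nonneg v), ← Real.sqrt_mul (hA.le.trans (le_max_left _ _))]
  exact Real.sqrt_le_sqrt (le_max_mul_norm_sq v)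

lemma tendsto_nhdsWithin_diff_zero_iff_ellipsoid (hA : 0 < A) (hB : 0 < B) (hC : 0 < C)
    (q : EuclideanSpace ℝ (Fin 3) → ℝ) (X : Set (EuclideanSpace ℝ (Fin 3))) (L : ℝ) :
    Tendsto q (𝓝[X \ {0}] 0) (𝓝 L) ↔
      ∀ ε > 0, ∃ δ > 0, ∀ r, 0 < r → r < δ →
        ∀ p ∈ ellipsoid A B C r ∩ X, |q p - L| < ε := by
  have hm : 0 < min A (min B C) := lt_min hA (lt_min hB hC)
  have hM : 0 < max A (max B C) := hA.trans_le (le_max_left _ _)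
  rw [Metric.tendsto_nhdsWithin_nhds]
  refine ⟨fun H ε hε => ?_, fun H ε hε => ?_⟩
  · obtain ⟨δ, hδ, Hδ⟩ := H ε hε
    refine ⟨√(min A (min B C)) * δ, by positivity, fun r hr hrδ p ⟨hpE, hpX⟩ => ?_⟩
    have hp : p ∈ ball 0 δ := ellipsoid_subset_ball hm.le (by rwa [abs_of_pos hr]) hpE
    exact Hδ ⟨hpX, fun h0 => zero_notMem_ellipsoid hr.ne' (h0 ▸ hpE)⟩ hp
  · obtain ⟨δ, hδ, Hδ⟩ := H ε hε
    refine ⟨δ / √(max A (max B C)), by positivity, fun v ⟨hvX, hv0⟩ hvδ => ?_⟩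
    obtain ⟨r, hr, hrv, hvE⟩ := exists_mem_ellipsoid hA hB hC hv0
    have hrδ : r < δ := by
      rw [dist_zero_right, lt_div_iff₀' (Real.sqrt_pos.mpr hM)] at hvδ
      exact hrv.trans_lt hvδ
    exact Hδ r hr hrδ v ⟨hvE, hvX⟩

end Ellipsoid

/-- `q` tends to `L` at the origin along the real surface `X_ℝ = {h = 0}` iff for every
`ε > 0` there is `δ > 0` such that `|q(p) − L| < ε` for every point `p` of the critical set
`C_r` (extrema of `q` on `E_r ∩ X_ℝ`) with `0 < r < δ`. -/
theorem limit_along_surface_iff_critical_sets (f g : MvPolynomial (Fin 3) ℝ)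
    (hg : ∃ ε > 0, ∀ v ∈ Metric.ball (0 : EuclideanSpace ℝ (Fin 3)) ε, eval v g = 0 → v = 0)
    (A B C : ℝ) (hA : 0 < A) (hB : 0 < B) (hC : 0 < C)
    (h : MvPolynomial (Fin 3) ℝ) (L : ℝ) :
    Tendsto (quotFun f g)
        (𝓝[{v : EuclideanSpace ℝ (Fin 3) | eval v h = 0} \ {0}] 0) (𝓝 L) ↔
      ∀ ε > 0, ∃ δ > 0, ∀ r : ℝ, 0 < r → r < δ →
        ∀ p ∈ ellipsoid A B C r ∩ {v : EuclideanSpace ℝ (Fin 3) | eval v h = 0},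
          (IsMaxOn (quotFun f g)
              (ellipsoid A B C r ∩ {v : EuclideanSpace ℝ (Fin 3) | eval v h = 0}) p ∨
           IsMinOn (quotFun f g)
              (ellipsoid A B C r ∩ {v : EuclideanSpace ℝ (Fin 3) | eval v h = 0}) p) →
          |quotFun f g p - L| < ε := by
  obtain ⟨ρ, hρ, hg⟩ := hg
  have hm : 0 < min A (min B C) := lt_min hA (lt_min hB hC)
  rw [tendsto_nhdsWithin_diff_zero_iff_ellipsoid hA hB hC]
  refine ⟨fun H ε hε => ?_, fun H ε hε => ?_⟩
  · obtain ⟨δ, hδ, Hδ⟩ := H ε hε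
    exact ⟨δ, hδ, fun r hr hrδ p hp _ => Hδ r hr hrδ p hp⟩
  · obtain ⟨δ, hδ, Hδ⟩ := H ε hε
    refine ⟨min δ (√(min A (min B C)) * ρ), by positivity, fun r hr hrδ => ?_⟩
    have hK : IsCompact (ellipsoid A B C r ∩ {v | eval v h = 0}) :=
      (isCompact_ellipsoid hm).inter_right
        (isClosed_eq (continuous_eval_euclidean h) continuous_const)
    have hgK : ellipsoid A B C r ∩ {v | eval v h = 0} ⊆ {v | eval v g ≠ 0} :=
      fun v ⟨hvE, _⟩ hgv => zero_notMem_ellipsoid hr.ne' <| hg v (ellipsoid_subset_ball hm.le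
        (by rw [abs_of_pos hr]; exact hrδ.trans_le (min_le_right _ _)) hvE) hgv ▸ hvE
    exact fun p hp => hK.abs_sub_lt_of_isExtrOn ((continuousOn_quotFun f g).mono hgK)
      (Hδ r hr (hrδ.trans_le (min_le_left _ _))) hp
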